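/- For every lattice graph Γ = P_{n₁}□⋯□P_{n_d} (with 2 ≤ n₁ ≤ ⋯ ≤ n_d and n_d ≥ 3), if the product n₁⋯n_d is odd, then nim(TER(Γ)) ≠ 0. -/

import Mathlib

/-- The minimum excludant of a set of naturals. -/
noncomputable def mex (S : Set ℕ) : ℕ := sInf {n : ℕ | n ∉ S}

/-- A gamegraph: positions with an option function whose option relation is
well-founded (all plays are acyclic), together with a starting position. -/
structure GameGraph where
  Pos : Type
  opt : Pos → Set Pos
  wf : WellFounded fun q p => q ∈ opt p
  start : Pos

/-- The nim-value of a position: the mex of the nim-values of its options;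
terminal positions get nim-value `0`. -/
noncomputable def GameGraph.nim (G : GameGraph) : G.Pos → ℕ :=
  G.wf.fix fun p ih => mex {n : ℕ | ∃ q, ∃ h : q ∈ G.opt p, ih q h = n}

/-- The nim-value of a gamegraph is the nim-value of its starting position. -/
noncomputable def GameGraph.nimValue (G : GameGraph) : ℕ := G.nim G.start

/-- A vertex set `K` is geodetically convex if it contains every vertex on a
geodesic (shortest path) between two of its vertices; in a connected graph,
`w` lies on a geodesic from `u` to `v` iff `dist u w + dist w v = dist u v`. -/
def geoConvex {V : Type} (G : SimpleGraph V) (K : Set V) : Prop :=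
  ∀ u ∈ K, ∀ v ∈ K, ∀ w, G.dist u w + G.dist w v = G.dist u v → w ∈ K

/-- The geodetic convex hull: the intersection of all convex sets containing `S`. -/
def geoHull {V : Type} (G : SimpleGraph V) (S : Set V) : Set V :=
  ⋂₀ {K | geoConvex G K ∧ S ⊆ K}

section Games
variable {V : Type} [Fintype V] [DecidableEq V]

/-- Options in the avoidance game `DNT(Γ)`: select an unselected vertex so that the
convex hull of the remaining unselected vertices is still the whole vertex set. -/
def DNTgraphOpt (G : SimpleGraph V) (P : Finset V) : Set (Finset V) :=
  {Q | ∃ v, v ∉ P ∧ Q = insert v P ∧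
    geoHull G ((↑(insert v P) : Set V)ᶜ) = Set.univ}

/-- Options in the achievement game `TER(Γ)`: a position whose unselected vertices
have convex hull smaller than the whole vertex set is terminal; otherwise any
unselected vertex may be selected. -/
def TERgraphOpt (G : SimpleGraph V) (P : Finset V) : Set (Finset V) :=
  {Q | geoHull G ((↑P : Set V)ᶜ) = Set.univ ∧ ∃ v, v ∉ P ∧ Q = insert v P}

theorem graphWF {opt : Finset V → Set (Finset V)}
    (h : ∀ P Q, Q ∈ opt P → ∃ v, v ∉ P ∧ Q = insert v P) :
    WellFounded fun Q P => Q ∈ opt P := by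
  have hsub : Subrelation (fun Q P : Finset V => Q ∈ opt P)
      (InvImage (· < ·) (fun P : Finset V => Fintype.card V - P.card)) := by
    intro Q P hQP
    obtain ⟨v, hv, rfl⟩ := h P Q hQP
    have h1 : (insert v P).card = P.card + 1 := Finset.card_insert_of_notMem hv
    have h2 : (insert v P).card ≤ Fintype.card V := Finset.card_le_univ _
    show Fintype.card V - (insert v P).card < Fintype.card V - P.card
    omega
  exact Subrelation.wf hsub (InvImage.wf _ Nat.lt_wfRel.wf)

/-- The gamegraph of the avoidance game `DNT(Γ)`; positions are the sets of jointly
selected vertices and the starting position is `∅`. -/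
def DNTgame (G : SimpleGraph V) : GameGraph :=
  ⟨Finset V, DNTgraphOpt G,
    graphWF (by rintro P Q ⟨v, hv, rfl, -⟩; exact ⟨v, hv, rfl⟩), ∅⟩

/-- The gamegraph of the achievement game `TER(Γ)`; positions are the sets of jointly
selected vertices and the starting position is `∅`. -/
def TERgame (G : SimpleGraph V) : GameGraph :=
  ⟨Finset V, TERgraphOpt G,
    graphWF (by rintro P Q ⟨-, v, hv, rfl⟩; exact ⟨v, hv, rfl⟩), ∅⟩

end Games

/-- The `d`-dimensional lattice graph `P_{n 0} □ ⋯ □ P_{n (d-1)}`: two vertices are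
adjacent iff they differ by one in exactly one coordinate. -/
def latticeGraph (d : ℕ) (n : Fin d → ℕ) : SimpleGraph (∀ i, Fin (n i)) where
  Adj x y := ∃ i, ((x i).val + 1 = (y i).val ∨ (y i).val + 1 = (x i).val) ∧
    ∀ j, j ≠ i → x j = y j
  symm := by
    constructor
    rintro x y ⟨i, h1, h2⟩
    exact ⟨i, h1.symm, fun j hj => (h2 j hj).symm⟩
  loopless := by
    constructor
    rintro x ⟨i, h1, -⟩
    rcases h1 with h | h <;> omega

namespace LatNim


lemma mex_zero_of_not_mem {S : Set ℕ} (h : 0 ∉ S) : mex S = 0 :=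
  Nat.sInf_eq_zero.mpr (Or.inl h)

lemma mex_ne_zero {S : Set ℕ} (h0 : 0 ∈ S) (hfin : S.Finite) : mex S ≠ 0 := by
  have hne : {n : ℕ | n ∉ S}.Nonempty := by
    have h1 : Sᶜ.Infinite := hfin.infinite_compl
    exact h1.nonempty
  have hmem := Nat.sInf_mem hne
  intro h
  rw [mex] at h
  rw [h] at hmem
  exact hmem h0

lemma nim_eq (G : GameGraph) (p : G.Pos) :
    G.nim p = mex {m : ℕ | ∃ q, ∃ _h : q ∈ G.opt p, G.nim q = m} :=
  WellFounded.fix_eq _ _ _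

lemma nim_zero (G : GameGraph) (p : G.Pos)
    (h : ∀ q, q ∈ G.opt p → G.nim q ≠ 0) : G.nim p = 0 := by
  rw [nim_eq]
  apply mex_zero_of_not_mem
  rintro ⟨q, hq, hq0⟩
  exact h q hq hq0

lemma nim_ne_zero (G : GameGraph) (hfin : Finite G.Pos) (p q : G.Pos)
    (hq : q ∈ G.opt p) (h0 : G.nim q = 0) : G.nim p ≠ 0 := by
  rw [nim_eq]
  refine mex_ne_zero ?_ ?_
  · exact ⟨q, hq, h0⟩
  exact (Set.finite_range G.nim).subset (by rintro m ⟨q, hq, rfl⟩; exact ⟨q, rfl⟩)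



variable {d : ℕ} {n : Fin d → ℕ}

/-- L1 distance. -/
def Dl (n : Fin d → ℕ) (x y : ∀ i, Fin (n i)) : ℕ := ∑ i, Nat.dist (x i).val (y i).val

lemma Dl_adj_le {x y : ∀ i, Fin (n i)} (h : (latticeGraph d n).Adj x y) :
    Dl n x y ≤ 1 := by
  obtain ⟨i, h1, h2⟩ := h
  have : ∀ j, j ≠ i → Nat.dist (x j).val (y j).val = 0 := by
    intro j hj; rw [h2 j hj]; exact Nat.dist_self _
  calc Dl n x y = ∑ j, Nat.dist (x j).val (y j).val := rfl
    _ = Nat.dist (x i).val (y i).val := by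
        rw [Finset.sum_eq_single i]
        · intro j _ hj; exact this j hj
        · intro hi; exact absurd (Finset.mem_univ i) hi
    _ ≤ 1 := by unfold Nat.dist; omega

lemma Dl_triangle (x z y : ∀ i, Fin (n i)) : Dl n x y ≤ Dl n x z + Dl n z y := by
  unfold Dl
  rw [← Finset.sum_add_distrib]
  refine Finset.sum_le_sum fun i _ => ?_
  unfold Nat.dist; omega

lemma Dl_le_walk_length {x y : ∀ i, Fin (n i)} (w : (latticeGraph d n).Walk x y) :
    Dl n x y ≤ w.length := by
  induction w with
  | nil => simp [Dl, Nat.dist_self]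
  | @cons u v z hadj w ih =>
    have h1 := Dl_adj_le hadj
    have h2 := Dl_triangle (n := n) u v z
    simp only [SimpleGraph.Walk.length_cons]
    omega

lemma exists_walk (x y : ∀ i, Fin (n i)) :
    ∃ w : (latticeGraph d n).Walk x y, w.length = Dl n x y := by
  suffices H : ∀ k x, Dl n x y = k → ∃ w : (latticeGraph d n).Walk x y, w.length = k by
    obtain ⟨w, hw⟩ := H (Dl n x y) x rfl; exact ⟨w, hw⟩
  intro k
  induction k with
  | zero =>
    intro x hx
    have : x = y := by
      funext i
      have : Nat.dist (x i).val (y i).val = 0 := by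
        have := Finset.sum_eq_zero_iff.mp hx i (Finset.mem_univ i)
        exact this
      exact Fin.ext (Nat.eq_of_dist_eq_zero this)
    subst this
    exact ⟨SimpleGraph.Walk.nil, rfl⟩
  | succ k ih =>
    intro x hx
    have hne : ∃ i, (x i).val ≠ (y i).val := by
      by_contra hall
      push_neg at hall
      have : Dl n x y = 0 := Finset.sum_eq_zero fun i _ => by
        rw [hall i]; exact Nat.dist_self _
      omega
    obtain ⟨i, hi⟩ := hne
    -- step value
    have hyi : (y i).val < n i := (y i).isLt
    have hxi : (x i).val < n i := (x i).isLt
    set zval : ℕ := if (x i).val < (y i).val then (x i).val + 1 else (x i).val - 1 with hz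
    have hzlt : zval < n i := by
      simp only [hz]; split_ifs <;> omega
    set x' : ∀ j, Fin (n j) := Function.update x i ⟨zval, hzlt⟩ with hx'
    have hx'i : (x' i).val = zval := by simp [hx']
    have hx'j : ∀ j, j ≠ i → x' j = x j := by
      intro j hj; simp [hx', Function.update_of_ne hj]
    have hadj : (latticeGraph d n).Adj x x' := by
      refine ⟨i, ?_, fun j hj => (hx'j j hj).symm⟩
      rw [hx'i]
      rcases Nat.lt_or_ge (x i).val (y i).val with h | h
      · left; simp only [hz]; split_ifs <;> omega
      · right; simp only [hz]; split_ifs <;> omega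
    have hdist : Nat.dist (x' i).val (y i).val = Nat.dist (x i).val (y i).val - 1 := by
      rw [hx'i]; unfold Nat.dist
      simp only [hz]; split_ifs <;> omega
    have hDl : Dl n x' y = k := by
      have hsplit : ∀ (u : ∀ j, Fin (n j)), Dl n u y
          = Nat.dist (u i).val (y i).val + ∑ j ∈ Finset.univ.erase i, Nat.dist (u j).val (y j).val := by
        intro u
        rw [Dl, ← Finset.add_sum_erase _ _ (Finset.mem_univ i)]
      have h1 := hsplit x'
      have h2 := hsplit x
      have heq : ∑ j ∈ Finset.univ.erase i, Nat.dist (x' j).val (y j).val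
          = ∑ j ∈ Finset.univ.erase i, Nat.dist (x j).val (y j).val := by
        refine Finset.sum_congr rfl fun j hj => ?_
        rw [hx'j j (Finset.ne_of_mem_erase hj)]
      have hpos : 1 ≤ Nat.dist (x i).val (y i).val := by unfold Nat.dist; omega
      omega
    obtain ⟨w, hw⟩ := ih x' hDl
    exact ⟨SimpleGraph.Walk.cons hadj w, by simp [hw]⟩

lemma lattice_reachable (x y : ∀ i, Fin (n i)) : (latticeGraph d n).Reachable x y := by
  obtain ⟨w, -⟩ := exists_walk (n := n) x y; exact ⟨w⟩

lemma lattice_dist (x y : ∀ i, Fin (n i)) : (latticeGraph d n).dist x y = Dl n x y := by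
  obtain ⟨w, hw⟩ := exists_walk (n := n) x y
  refine le_antisymm (hw ▸ SimpleGraph.dist_le w) ?_
  obtain ⟨p, hp⟩ := (lattice_reachable x y).exists_walk_length_eq_dist
  rw [← hp]; exact Dl_le_walk_length p

/-- Betweenness in the lattice graph is coordinatewise betweenness. -/
lemma between_iff (x z y : ∀ i, Fin (n i)) :
    (latticeGraph d n).dist x z + (latticeGraph d n).dist z y = (latticeGraph d n).dist x y
    ↔ ∀ i, Nat.dist (x i).val (z i).val + Nat.dist (z i).val (y i).val
        = Nat.dist (x i).val (y i).val := by
  rw [lattice_dist, lattice_dist, lattice_dist]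
  constructor
  · intro h
    have hle : ∀ i ∈ Finset.univ, Nat.dist (x i).val (y i).val
        ≤ Nat.dist (x i).val (z i).val + Nat.dist (z i).val (y i).val := by
      intro i _; unfold Nat.dist; omega
    have : Dl n x y = ∑ i, (Nat.dist (x i).val (z i).val + Nat.dist (z i).val (y i).val) := by
      rw [Finset.sum_add_distrib]; unfold Dl at h ⊢; omega
    have := (Finset.sum_eq_sum_iff_of_le hle).mp this
    intro i; exact (this i (Finset.mem_univ i)).symm
  · intro h
    unfold Dl
    rw [← Finset.sum_add_distrib]
    exact Finset.sum_congr rfl fun i _ => h i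



section Hull
variable {V : Type} {G : SimpleGraph V}

lemma subset_hull (S : Set V) : S ⊆ geoHull G S :=
  fun x hx K hK => hK.2 hx

lemma hull_subset {S K : Set V} (hK : geoConvex G K) (hSK : S ⊆ K) : geoHull G S ⊆ K :=
  fun x hx => hx K ⟨hK, hSK⟩

lemma hull_convex (S : Set V) : geoConvex G (geoHull G S) := by
  intro u hu v hv w hw
  intro K hK
  exact hK.1 u (hu K hK) v (hv K hK) w hw

end Hull

/-- pointwise-between implies geodesic-between -/
lemma between_of_le {x z y : ∀ i, Fin (n i)} (h1 : x ≤ z) (h2 : z ≤ y) :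
    (latticeGraph d n).dist x z + (latticeGraph d n).dist z y = (latticeGraph d n).dist x y := by
  rw [between_iff]
  intro i
  have a1 : (x i).val ≤ (z i).val := h1 i
  have a2 : (z i).val ≤ (y i).val := h2 i
  unfold Nat.dist; omega

lemma convex_inf_mem {K : Set (∀ i, Fin (n i))} (hK : geoConvex (latticeGraph d n) K)
    {x y : ∀ i, Fin (n i)} (hx : x ∈ K) (hy : y ∈ K) : x ⊓ y ∈ K := by
  refine hK x hx y hy (x ⊓ y) ?_
  rw [between_iff]
  intro i
  have h1 : ((x ⊓ y) i).val = min (x i).val (y i).val := by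
    have : (x ⊓ y) i = min (x i) (y i) := rfl
    rw [this]
    rcases le_total (x i) (y i) with h | h
    · rw [min_eq_left h, min_eq_left (Fin.le_def.mp h)]
    · rw [min_eq_right h, min_eq_right (Fin.le_def.mp h)]
  rw [h1]; unfold Nat.dist; omega

lemma convex_sup_mem {K : Set (∀ i, Fin (n i))} (hK : geoConvex (latticeGraph d n) K)
    {x y : ∀ i, Fin (n i)} (hx : x ∈ K) (hy : y ∈ K) : x ⊔ y ∈ K := by
  refine hK x hx y hy (x ⊔ y) ?_
  rw [between_iff]
  intro i
  have h1 : ((x ⊔ y) i).val = max (x i).val (y i).val := by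
    have : (x ⊔ y) i = max (x i) (y i) := rfl
    rw [this]
    rcases le_total (x i) (y i) with h | h
    · rw [max_eq_right h, max_eq_right (Fin.le_def.mp h)]
    · rw [max_eq_left h, max_eq_left (Fin.le_def.mp h)]
  rw [h1]; unfold Nat.dist; omega

/-- If `S` touches every face of the lattice, its hull is everything. -/
lemma hull_univ_of_touch (hd : 0 < d) (S : Set (∀ i, Fin (n i)))
    (hlow : ∀ i, ∃ u ∈ S, (u i).val = 0)
    (hhigh : ∀ i, ∃ w ∈ S, (w i).val = n i - 1) :
    geoHull (latticeGraph d n) S = Set.univ := by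
  have hne : (Finset.univ : Finset (Fin d)).Nonempty := ⟨⟨0, hd⟩, Finset.mem_univ _⟩
  choose u hu hu0 using hlow
  choose w hw hw1 using hhigh
  set a : ∀ i, Fin (n i) := Finset.univ.inf' hne u with ha
  set b : ∀ i, Fin (n i) := Finset.univ.sup' hne w with hb
  have haK : a ∈ geoHull (latticeGraph d n) S := by
    refine Finset.inf'_mem (geoHull (latticeGraph d n) S) ?_ _ hne _
      (fun i _ => subset_hull S (hu i))
    intro p hp q hq
    exact convex_inf_mem (hull_convex S) hp hq
  have hbK : b ∈ geoHull (latticeGraph d n) S := by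
    refine Finset.sup'_mem (geoHull (latticeGraph d n) S) ?_ _ hne _
      (fun i _ => subset_hull S (hw i))
    intro p hp q hq
    exact convex_sup_mem (hull_convex S) hp hq
  ext z
  simp only [Set.mem_univ, iff_true]
  have haz : a ≤ z := by
    intro j
    have h1 : a j ≤ u j j := by
      have := Finset.inf'_le (f := u) (b := j) (Finset.mem_univ j)
      calc a j = (Finset.univ.inf' hne u) j := rfl
        _ ≤ u j j := by
            have hle : (Finset.univ.inf' hne u) ≤ u j := Finset.inf'_le _ (Finset.mem_univ j)
            exact hle j
    have : (a j).val ≤ 0 := by rw [← hu0 j]; exact h1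
    exact Fin.le_def.mpr (by omega)
  have hzb : z ≤ b := by
    intro j
    have h1 : w j j ≤ b j := by
      have hle : w j ≤ Finset.univ.sup' hne w := Finset.le_sup' _ (Finset.mem_univ j)
      exact hle j
    refine Fin.le_def.mpr ?_
    have h2 : (z j).val ≤ n j - 1 := by have := (z j).isLt; omega
    calc (z j).val ≤ n j - 1 := h2
      _ = (w j j).val := (hw1 j).symm
      _ ≤ (b j).val := h1
  exact hull_convex S a haK b hbK z (between_of_le haz hzb)

/-- If `S` misses the low face in coordinate `i`, its hull is not everything. -/
lemma hull_ne_univ_of_low (h1 : ∀ i, 1 ≤ n i) (i : Fin d) (S : Set (∀ i, Fin (n i)))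
    (h : ∀ x ∈ S, 1 ≤ (x i).val) :
    geoHull (latticeGraph d n) S ≠ Set.univ := by
  set K : Set (∀ i, Fin (n i)) := {x | 1 ≤ (x i).val} with hKdef
  have hKconv : geoConvex (latticeGraph d n) K := by
    intro p hp q hq z hz
    rw [between_iff] at hz
    have := hz i
    have hp' : 1 ≤ (p i).val := hp
    have hq' : 1 ≤ (q i).val := hq
    show 1 ≤ (z i).val
    unfold Nat.dist at this; omega
  intro hcon
  have : geoHull (latticeGraph d n) S ⊆ K := hull_subset hKconv h
  rw [hcon] at this
  have hz : (fun j => (⟨0, h1 j⟩ : Fin (n j))) ∈ K := this (Set.mem_univ _)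
  simp [hKdef] at hz

/-- If `S` misses the high face in coordinate `i`, its hull is not everything. -/
lemma hull_ne_univ_of_high (h1 : ∀ i, 1 ≤ n i) (i : Fin d) (S : Set (∀ i, Fin (n i)))
    (h : ∀ x ∈ S, (x i).val < n i - 1) :
    geoHull (latticeGraph d n) S ≠ Set.univ := by
  set K : Set (∀ i, Fin (n i)) := {x | (x i).val < n i - 1} with hKdef
  have hKconv : geoConvex (latticeGraph d n) K := by
    intro p hp q hq z hz
    rw [between_iff] at hz
    have := hz i
    have hp' : (p i).val < n i - 1 := hp
    have hq' : (q i).val < n i - 1 := hq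
    show (z i).val < n i - 1
    unfold Nat.dist at this; omega
  intro hcon
  have hsub : geoHull (latticeGraph d n) S ⊆ K := hull_subset hKconv h
  rw [hcon] at hsub
  have hzlt : n i - 1 < n i := by have := h1 i; omega
  have hz : (fun j => if hj : j = i then (hj ▸ (⟨n i - 1, hzlt⟩ : Fin (n i))) else ⟨0, h1 j⟩) ∈ K :=
    hsub (Set.mem_univ _)
  simp [hKdef] at hz


end LatNim

namespace LatNim

variable {d : ℕ} {n : Fin d → ℕ}

abbrev Vt (n : Fin d → ℕ) := ∀ i, Fin (n i)

def revp (x : Vt n) : Vt n := fun i => (x i).rev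

lemma revp_revp (x : Vt n) : revp (revp x) = x := funext fun i => Fin.rev_rev _

lemma val_revp (x : Vt n) (i : Fin d) : (revp x i).val = n i - 1 - (x i).val := by
  have := Fin.val_rev (x i)
  have := (x i).isLt
  show ((x i).rev).val = n i - 1 - (x i).val
  omega

def ctr (n : Fin d → ℕ) (hpos : ∀ i, 0 < n i) : Vt n :=
  fun i => ⟨n i / 2, Nat.div_lt_self (hpos i) one_lt_two⟩

lemma revp_ctr (hpos : ∀ i, 0 < n i) (ho : ∀ i, Odd (n i)) : revp (ctr n hpos) = ctr n hpos := by
  funext i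
  apply Fin.ext
  rw [val_revp]
  have := (Nat.odd_iff.mp (ho i))
  show n i - 1 - n i / 2 = n i / 2
  omega

lemma eq_ctr_of_revp_eq (hpos : ∀ i, 0 < n i) (ho : ∀ i, Odd (n i)) {x : Vt n}
    (h : revp x = x) : x = ctr n hpos := by
  funext i
  apply Fin.ext
  have h1 : (revp x i).val = (x i).val := by rw [h]
  rw [val_revp] at h1
  have := (Nat.odd_iff.mp (ho i))
  have := (x i).isLt
  show (x i).val = n i / 2
  omega

section Counters

def cntL (i : Fin d) (S : Finset (Vt n)) : ℕ := (S.filter fun x => (x i).val = 0).card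
def cntH (i : Fin d) (S : Finset (Vt n)) : ℕ := (S.filter fun x => (x i).val = n i - 1).card

lemma cntL_le_card (i : Fin d) (S : Finset (Vt n)) : cntL i S ≤ S.card :=
  Finset.card_filter_le _ _

lemma cntL_erase_of_ne (i : Fin d) (S : Finset (Vt n)) {v : Vt n} (h : (v i).val ≠ 0) :
    cntL i (S.erase v) = cntL i S := by
  unfold cntL
  rw [Finset.filter_erase, Finset.erase_eq_of_notMem]
  intro hmem
  exact h (Finset.mem_filter.mp hmem).2

lemma cntL_erase_of_eq (i : Fin d) (S : Finset (Vt n)) {v : Vt n} (hv : v ∈ S)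
    (h : (v i).val = 0) : cntL i (S.erase v) = cntL i S - 1 := by
  unfold cntL
  rw [Finset.filter_erase, Finset.card_erase_of_mem (Finset.mem_filter.mpr ⟨hv, h⟩)]

lemma cntH_erase_of_ne (i : Fin d) (S : Finset (Vt n)) {v : Vt n} (h : (v i).val ≠ n i - 1) :
    cntH i (S.erase v) = cntH i S := by
  unfold cntH
  rw [Finset.filter_erase, Finset.erase_eq_of_notMem]
  intro hmem
  exact h (Finset.mem_filter.mp hmem).2

lemma cntH_erase_of_eq (i : Fin d) (S : Finset (Vt n)) {v : Vt n} (hv : v ∈ S)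
    (h : (v i).val = n i - 1) : cntH i (S.erase v) = cntH i S - 1 := by
  unfold cntH
  rw [Finset.filter_erase, Finset.card_erase_of_mem (Finset.mem_filter.mpr ⟨hv, h⟩)]

lemma cntL_erase_ge (i : Fin d) (S : Finset (Vt n)) (v : Vt n) :
    cntL i S - 1 ≤ cntL i (S.erase v) := by
  unfold cntL
  rw [Finset.filter_erase]
  exact Finset.pred_card_le_card_erase

lemma cntH_erase_ge (i : Fin d) (S : Finset (Vt n)) (v : Vt n) :
    cntH i S - 1 ≤ cntH i (S.erase v) := by
  unfold cntH
  rw [Finset.filter_erase]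
  exact Finset.pred_card_le_card_erase

lemma cntL_eq_cntH (h2 : ∀ i, 2 ≤ n i) (i : Fin d) (S : Finset (Vt n))
    (hsym : ∀ x ∈ S, revp x ∈ S) : cntL i S = cntH i S := by
  unfold cntL cntH
  refine Finset.card_bij' (fun x _ => revp x) (fun x _ => revp x) ?_ ?_ ?_ ?_
  · intro a ha
    obtain ⟨haS, hai⟩ := Finset.mem_filter.mp ha
    refine Finset.mem_filter.mpr ⟨hsym a haS, ?_⟩
    rw [val_revp, hai]
    omega
  · intro a ha
    obtain ⟨haS, hai⟩ := Finset.mem_filter.mp ha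
    refine Finset.mem_filter.mpr ⟨hsym a haS, ?_⟩
    rw [val_revp, hai]
    have := h2 i
    omega
  · intro a _; exact revp_revp a
  · intro a _; exact revp_revp a

end Counters
end LatNim

namespace LatNim

variable {d : ℕ} {n : Fin d → ℕ}

lemma hull_compl_univ (hd : 0 < d) (P : Finset (Vt n))
    (hL : ∀ i, 0 < cntL i Pᶜ) (hH : ∀ i, 0 < cntH i Pᶜ) :
    geoHull (latticeGraph d n) ((↑P : Set (Vt n))ᶜ) = Set.univ := by
  rw [← Finset.coe_compl]
  apply hull_univ_of_touch hd
  · intro i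
    obtain ⟨u, hu⟩ := Finset.card_pos.mp (hL i)
    obtain ⟨h1, h2⟩ := Finset.mem_filter.mp hu
    exact ⟨u, Finset.mem_coe.mpr h1, h2⟩
  · intro i
    obtain ⟨u, hu⟩ := Finset.card_pos.mp (hH i)
    obtain ⟨h1, h2⟩ := Finset.mem_filter.mp hu
    exact ⟨u, Finset.mem_coe.mpr h1, h2⟩

lemma TER_nim_ne_zero {V : Type} [Fintype V] [DecidableEq V] (G : SimpleGraph V)
    (P Q : Finset V) (hQ : Q ∈ TERgraphOpt G P) (h0 : (TERgame G).nim Q = 0) :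
    (TERgame G).nim P ≠ 0 :=
  nim_ne_zero (TERgame G) (by show Finite (Finset V); infer_instance) P Q hQ h0

lemma nim_of_terminal {V : Type} [Fintype V] [DecidableEq V] (G : SimpleGraph V) (R : Finset V)
    (h : geoHull G ((↑R : Set V)ᶜ) ≠ Set.univ) : (TERgame G).nim R = 0 := by
  apply nim_zero
  intro q hq
  exact absurd hq.1 h

lemma claimB (hd : 0 < d) (hpos : ∀ i, 0 < n i) (ho : ∀ i, Odd (n i)) (h3 : ∀ i, 3 ≤ n i) :
    ∀ k (P : Finset (Vt n)), Pᶜ.card ≤ k →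
      (∀ x ∈ Pᶜ, revp x ∈ Pᶜ) → ctr n hpos ∈ P →
      (∀ i, 2 ≤ cntL i Pᶜ ∧ 2 ≤ cntH i Pᶜ) →
      (TERgame (latticeGraph d n)).nim P = 0 := by
  intro k
  induction k with
  | zero =>
    intro P hcard _ _ hcnt
    exfalso
    have h1 := (hcnt ⟨0, hd⟩).1
    have := cntL_le_card (n := n) ⟨0, hd⟩ Pᶜ
    omega
  | succ k ih =>
    intro P hcard hsym hc hcnt
    apply nim_zero
    intro Q hQ
    obtain ⟨hhullP, v, hv, rfl⟩ := hQ
    have hvS : v ∈ Pᶜ := Finset.mem_compl.mpr hv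
    have hvc : v ≠ ctr n hpos := fun h => hv (h ▸ hc)
    have hS' : ((insert v P)ᶜ : Finset (Vt n)) = Pᶜ.erase v := Finset.compl_insert
    have hcnt' : ∀ i, 1 ≤ cntL i ((insert v P)ᶜ) ∧ 1 ≤ cntH i ((insert v P)ᶜ) := by
      intro i
      rw [hS']
      have h1 := (hcnt i).1
      have h2 := (hcnt i).2
      have h3' := cntL_erase_ge i Pᶜ v
      have h4 := cntH_erase_ge i Pᶜ v
      omega
    have hhullQ : geoHull (latticeGraph d n) ((↑(insert v P) : Set (Vt n))ᶜ) = Set.univ :=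
      hull_compl_univ hd _ (fun i => (hcnt' i).1) (fun i => (hcnt' i).2)
    have hfin : Finite (TERgame (latticeGraph d n)).Pos := by
      show Finite (Finset (Vt n)); infer_instance
    by_cases hcase : ∃ i, cntL i ((insert v P)ᶜ) ≤ 1 ∨ cntH i ((insert v P)ᶜ) ≤ 1
    · obtain ⟨i, hi⟩ := hcase
      rcases hi with hi | hi
      · -- low counter is exactly 1: take the unique low vertex, terminal
        have h1 : cntL i ((insert v P)ᶜ) = 1 := le_antisymm hi (hcnt' i).1
        obtain ⟨u, hu⟩ := Finset.card_eq_one.mp h1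
        have huF : u ∈ Finset.filter (fun x => (x i).val = 0) ((insert v P)ᶜ) := by
          rw [hu]; exact Finset.mem_singleton_self u
        have huS : u ∈ (insert v P)ᶜ := (Finset.mem_filter.mp huF).1
        refine TER_nim_ne_zero _ _ (insert u (insert v P))
          ⟨hhullQ, u, Finset.mem_compl.mp huS, rfl⟩ ?_
        apply nim_of_terminal
        apply hull_ne_univ_of_low (fun j => by have := h3 j; omega) i
        intro x hx
        by_contra h0
        push_neg at h0
        have h0' : (x i).val = 0 := by omega
        have hxR : x ∉ insert u (insert v P) := fun h => hx (Finset.mem_coe.mpr h)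
        have hxQ : x ∈ (insert v P)ᶜ :=
          Finset.mem_compl.mpr (fun h => hxR (Finset.mem_insert_of_mem h))
        have hxF : x ∈ Finset.filter (fun y => (y i).val = 0) ((insert v P)ᶜ) :=
          Finset.mem_filter.mpr ⟨hxQ, h0'⟩
        rw [hu] at hxF
        exact hxR (by rw [Finset.mem_singleton.mp hxF]; exact Finset.mem_insert_self u _)
      · -- high counter is exactly 1
        have h1 : cntH i ((insert v P)ᶜ) = 1 := le_antisymm hi (hcnt' i).2
        obtain ⟨u, hu⟩ := Finset.card_eq_one.mp h1
        have huF : u ∈ Finset.filter (fun x => (x i).val = n i - 1) ((insert v P)ᶜ) := by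
          rw [hu]; exact Finset.mem_singleton_self u
        have huS : u ∈ (insert v P)ᶜ := (Finset.mem_filter.mp huF).1
        refine TER_nim_ne_zero _ _ (insert u (insert v P))
          ⟨hhullQ, u, Finset.mem_compl.mp huS, rfl⟩ ?_
        apply nim_of_terminal
        apply hull_ne_univ_of_high (fun j => by have := h3 j; omega) i
        intro x hx
        by_contra h0
        push_neg at h0
        have h0' : (x i).val = n i - 1 := by
          have := (x i).isLt; omega
        have hxR : x ∉ insert u (insert v P) := fun h => hx (Finset.mem_coe.mpr h)
        have hxQ : x ∈ (insert v P)ᶜ :=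
          Finset.mem_compl.mpr (fun h => hxR (Finset.mem_insert_of_mem h))
        have hxF : x ∈ Finset.filter (fun y => (y i).val = n i - 1) ((insert v P)ᶜ) :=
          Finset.mem_filter.mpr ⟨hxQ, h0'⟩
        rw [hu] at hxF
        exact hxR (by rw [Finset.mem_singleton.mp hxF]; exact Finset.mem_insert_self u _)
    · -- mirror move
      push_neg at hcase
      set u := revp v with hudef
      have huv : u ≠ v := fun h => hvc (eq_ctr_of_revp_eq hpos ho h)
      have huS : u ∈ Pᶜ := hsym v hvS
      have huQ : u ∈ (insert v P)ᶜ := by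
        rw [hS']; exact Finset.mem_erase.mpr ⟨huv, huS⟩
      refine TER_nim_ne_zero _ _ (insert u (insert v P))
        ⟨hhullQ, u, Finset.mem_compl.mp huQ, rfl⟩ ?_
      have hRc : ((insert u (insert v P))ᶜ : Finset (Vt n)) = (Pᶜ.erase v).erase u := by
        rw [Finset.compl_insert, hS']
      have huQ' : u ∈ Pᶜ.erase v := Finset.mem_erase.mpr ⟨huv, huS⟩
      apply ih
      · -- card bound
        rw [hRc, Finset.card_erase_of_mem huQ', Finset.card_erase_of_mem hvS]
        omega
      · -- symmetry
        intro x hx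
        rw [hRc] at hx ⊢
        obtain ⟨hxu, hx2⟩ := Finset.mem_erase.mp hx
        obtain ⟨hxv, hxS⟩ := Finset.mem_erase.mp hx2
        refine Finset.mem_erase.mpr ⟨?_, Finset.mem_erase.mpr ⟨?_, hsym x hxS⟩⟩
        · intro h
          apply hxv
          rw [← revp_revp x, h, hudef, revp_revp]
        · intro h
          apply hxu
          rw [← revp_revp x, h]
      · exact Finset.mem_insert_of_mem (Finset.mem_insert_of_mem hc)
      · -- counters remain ≥ 2
        intro i
        rw [hRc]
        have hvu : (u i).val = n i - 1 - (v i).val := val_revp v i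
        have hsymS := cntL_eq_cntH (fun j => by have := h3 j; omega) i Pᶜ hsym
        have hL' := (hcase i).1
        have hH' := (hcase i).2
        rw [hS'] at hL' hH'
        have h3i := h3 i
        have hvlt := (v i).isLt
        by_cases hv0 : (v i).val = 0
        · have hu1 : (u i).val = n i - 1 := by omega
          constructor
          · rw [cntL_erase_of_ne i _ (show (u i).val ≠ 0 by omega)]
            omega
          · rw [cntH_erase_of_eq i _ huQ' hu1,
              cntH_erase_of_ne i _ (show (v i).val ≠ n i - 1 by omega)]
            have := cntL_erase_of_eq i Pᶜ hvS hv0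
            omega
        · by_cases hv1 : (v i).val = n i - 1
          · have hu0 : (u i).val = 0 := by omega
            constructor
            · rw [cntL_erase_of_eq i _ huQ' hu0, cntL_erase_of_ne i _ hv0]
              have := cntH_erase_of_eq i Pᶜ hvS hv1
              omega
            · rw [cntH_erase_of_ne i _ (show (u i).val ≠ n i - 1 by omega)]
              omega
          · constructor
            · rw [cntL_erase_of_ne i _ (show (u i).val ≠ 0 by omega)]
              omega
            · rw [cntH_erase_of_ne i _ (show (u i).val ≠ n i - 1 by omega)]
              omega

end LatNim

/-- For every lattice graph `Γ = P_{n₁} □ ⋯ □ P_{n_d}` with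
`2 ≤ n₁ ≤ ⋯ ≤ n_d` and `n_d ≥ 3`, if the product `n₁ ⋯ n_d` is odd then
`nim(TER(Γ)) ≠ 0`. -/
theorem lattice_TER_nim_odd (d : ℕ) (hd : 0 < d) (n : Fin d → ℕ) (hmono : Monotone n)
    (h2 : ∀ i, 2 ≤ n i) (h3 : 3 ≤ n ⟨d - 1, by omega⟩) (hodd : Odd (∏ i, n i)) :
    (TERgame (latticeGraph d n)).nimValue ≠ 0 := by
  classical
  have hpos : ∀ i, 0 < n i := fun i => by have := h2 i; omega
  have ho : ∀ i, Odd (n i) := by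
    intro i
    rcases Nat.even_or_odd (n i) with he | h
    · exfalso
      have hdvd : (2:ℕ) ∣ ∏ j, n j :=
        dvd_trans he.two_dvd (Finset.dvd_prod_of_mem n (Finset.mem_univ i))
      rw [Nat.odd_iff] at hodd
      omega
    · exact h
  have h3' : ∀ i, 3 ≤ n i := fun i => by
    have := h2 i; have := Nat.odd_iff.mp (ho i); omega
  have hstart : geoHull (latticeGraph d n)
      ((↑(∅ : Finset (∀ i, Fin (n i))) : Set (∀ i, Fin (n i)))ᶜ) = Set.univ := by
    have he : ((↑(∅ : Finset (∀ i, Fin (n i))) : Set (∀ i, Fin (n i)))ᶜ) = Set.univ := by simp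
    rw [he]
    exact (Set.eq_univ_of_univ_subset (LatNim.subset_hull _))
  show (TERgame (latticeGraph d n)).nim (∅ : Finset (∀ i, Fin (n i))) ≠ 0
  rcases Nat.lt_or_ge d 2 with hd1 | hd2
  · -- one-dimensional case: take the low end of the path
    set v0 : ∀ i, Fin (n i) := fun i => ⟨0, hpos i⟩ with hv0
    refine LatNim.TER_nim_ne_zero _ _ (insert v0 ∅)
      ⟨hstart, v0, Finset.notMem_empty _, rfl⟩ ?_
    apply LatNim.nim_of_terminal
    apply LatNim.hull_ne_univ_of_low (fun i => hpos i) ⟨0, hd⟩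
    intro x hx
    by_contra h0
    push_neg at h0
    have h0' : (x ⟨0, hd⟩).val = 0 := by omega
    have hxv : x = v0 := by
      funext j
      have hj : j = ⟨0, hd⟩ := by omega
      rw [hj]
      exact Fin.ext h0'
    apply hx
    rw [hxv]
    exact Finset.mem_coe.mpr (Finset.mem_insert_self _ _)
  · -- d ≥ 2 : take the center, then mirror
    set c : ∀ i, Fin (n i) := LatNim.ctr n hpos with hc
    refine LatNim.TER_nim_ne_zero _ _ (insert c ∅)
      ⟨hstart, c, Finset.notMem_empty _, rfl⟩ ?_
    apply LatNim.claimB hd hpos ho h3' (((insert c ∅ : Finset (∀ i, Fin (n i))))ᶜ).card _ le_rfl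
    · -- symmetry of the complement
      intro x hx
      have hx' : x ≠ c := by
        intro h
        apply Finset.mem_compl.mp hx
        rw [h]
        exact Finset.mem_insert_self _ _
      refine Finset.mem_compl.mpr ?_
      intro hmem
      rcases Finset.mem_insert.mp hmem with h | h
      · apply hx'
        have : LatNim.revp (LatNim.revp x) = LatNim.revp c := by rw [h]
        rw [LatNim.revp_revp] at this
        rw [this, hc, LatNim.revp_ctr hpos ho]
      · exact absurd h (Finset.notMem_empty _)
    · exact Finset.mem_insert_self _ _
    · -- counters of the complement of {c} are at least 2
      intro i
      have hcival : (c i).val = n i / 2 := rfl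
      have hci1 : 1 ≤ (c i).val := by
        rw [hcival]; have := h3' i; omega
      obtain ⟨j, hji⟩ : ∃ j : Fin d, j ≠ i := by
        by_cases hij : i = (⟨0, hd⟩ : Fin d)
        · exact ⟨⟨1, by omega⟩, by rw [hij]; intro h; exact absurd (congrArg Fin.val h) (by simp)⟩
        · exact ⟨⟨0, hd⟩, fun h => hij h.symm⟩
      set x1 : ∀ k, Fin (n k) := fun k => ⟨0, hpos k⟩ with hx1
      set x2 : ∀ k, Fin (n k) := Function.update x1 j ⟨1, by have := h3' j; omega⟩ with hx2
      have hx1i : (x1 i).val = 0 := rfl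
      have hx2i : (x2 i).val = 0 := by
        rw [hx2, Function.update_of_ne (Ne.symm hji)]
      have hne12 : x1 ≠ x2 := by
        intro h
        have heq : (x1 j).val = (x2 j).val := by rw [h]
        rw [hx2, Function.update_self] at heq
        have h0 : (x1 j).val = 0 := rfl
        rw [h0] at heq
        simp at heq
      have hx1c : x1 ≠ c := fun h => by
        rw [h] at hx1i; omega
      have hx2c : x2 ≠ c := fun h => by
        rw [h] at hx2i; omega
      have hmem1 : x1 ∈ (insert c ∅ : Finset (∀ k, Fin (n k)))ᶜ := by
        refine Finset.mem_compl.mpr ?_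
        intro h
        rcases Finset.mem_insert.mp h with h | h
        · exact hx1c h
        · exact absurd h (Finset.notMem_empty _)
      have hmem2 : x2 ∈ (insert c ∅ : Finset (∀ k, Fin (n k)))ᶜ := by
        refine Finset.mem_compl.mpr ?_
        intro h
        rcases Finset.mem_insert.mp h with h | h
        · exact hx2c h
        · exact absurd h (Finset.notMem_empty _)
      constructor
      · have hlt : 1 < (((insert c ∅ : Finset (∀ k, Fin (n k)))ᶜ).filter
            (fun x => (x i).val = 0)).card :=
          Finset.one_lt_card.mpr ⟨x1, Finset.mem_filter.mpr ⟨hmem1, hx1i⟩,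
            x2, Finset.mem_filter.mpr ⟨hmem2, hx2i⟩, hne12⟩
        exact hlt
      · have hy1i : (LatNim.revp x1 i).val = n i - 1 := by
          rw [LatNim.val_revp]; omega
        have hy2i : (LatNim.revp x2 i).val = n i - 1 := by
          rw [LatNim.val_revp]; omega
        have hyne : LatNim.revp x1 ≠ LatNim.revp x2 := by
          intro h
          apply hne12
          rw [← LatNim.revp_revp x1, h, LatNim.revp_revp]
        have hy1c : LatNim.revp x1 ≠ c := by
          intro h
          apply hx1c
          rw [← LatNim.revp_revp x1, h, hc, LatNim.revp_ctr hpos ho]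
        have hy2c : LatNim.revp x2 ≠ c := by
          intro h
          apply hx2c
          rw [← LatNim.revp_revp x2, h, hc, LatNim.revp_ctr hpos ho]
        have hmem1' : LatNim.revp x1 ∈ (insert c ∅ : Finset (∀ k, Fin (n k)))ᶜ := by
          refine Finset.mem_compl.mpr ?_
          intro h
          rcases Finset.mem_insert.mp h with h | h
          · exact hy1c h
          · exact absurd h (Finset.notMem_empty _)
        have hmem2' : LatNim.revp x2 ∈ (insert c ∅ : Finset (∀ k, Fin (n k)))ᶜ := by
          refine Finset.mem_compl.mpr ?_
          intro h
          rcases Finset.mem_insert.mp h with h | h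
          · exact hy2c h
          · exact absurd h (Finset.notMem_empty _)
        have hlt : 1 < (((insert c ∅ : Finset (∀ k, Fin (n k)))ᶜ).filter
            (fun x => (x i).val = n i - 1)).card :=
          Finset.one_lt_card.mpr ⟨LatNim.revp x1, Finset.mem_filter.mpr ⟨hmem1', hy1i⟩,
            LatNim.revp x2, Finset.mem_filter.mpr ⟨hmem2', hy2i⟩, hyne⟩
        exact hlt
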